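/- Let E' and E be elliptic curves over an algebraically closed field of characteristic 0 such that End(E') ⊗ Q and End(E) ⊗ Q are both isomorphic to an imaginary quadratic field K of discriminant D, and E', E are isogenous. Equip Hom(E', E) with the quadratic form f ↦ deg f. Then there exist non-zero integers m and n such that m² · disc(Hom(E', E)) = −n² · D. -/

import Mathlib

/-- An abstract theory of (elliptic curves and) isogenies over an algebraically closed
field: a category of curves with abelian-group `Hom`-sets, equipped with a degree
function satisfying the standard axioms (degree is multiplicative, positive on non-zero
homomorphisms, the associated form is bilinear, and dual isogenies exist). -/
structure IsogenyTheory (Curve : Type) (Hom : Curve → Curve → Type)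
    [∀ E F : Curve, AddCommGroup (Hom E F)] : Type where
  comp : {E F G : Curve} → Hom F G → Hom E F → Hom E G
  one : (E : Curve) → Hom E E
  comp_assoc : ∀ {E F G H : Curve} (f : Hom G H) (g : Hom F G) (h : Hom E F),
    comp (comp f g) h = comp f (comp g h)
  one_comp : ∀ {E F : Curve} (f : Hom E F), comp (one F) f = f
  comp_one : ∀ {E F : Curve} (f : Hom E F), comp f (one E) = f
  comp_add : ∀ {E F G : Curve} (f : Hom F G) (g h : Hom E F),
    comp f (g + h) = comp f g + comp f h
  add_comp : ∀ {E F G : Curve} (f g : Hom F G) (h : Hom E F),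
    comp (f + g) h = comp f h + comp g h
  deg : {E F : Curve} → Hom E F → ℤ
  deg_zero : ∀ {E F : Curve}, deg (0 : Hom E F) = 0
  deg_pos : ∀ {E F : Curve} (f : Hom E F), f ≠ 0 → 0 < deg f
  deg_one : ∀ E : Curve, deg (one E) = 1
  deg_comp : ∀ {E F G : Curve} (f : Hom F G) (g : Hom E F),
    deg (comp f g) = deg f * deg g
  deg_quadratic : ∀ {E F : Curve} (f g h : Hom E F),
    deg (f + g + h) - deg (f + g) - deg h
      = (deg (f + h) - deg f - deg h) + (deg (g + h) - deg g - deg h)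
  exists_dual : ∀ {E F : Curve} (f : Hom E F), f ≠ 0 →
    ∃ g : Hom F E, comp g f = deg f • one E ∧ comp f g = deg f • one F

/-- `End(E) ⊗ ℚ ≅ K`: the endomorphism ring of `E` embeds as a ring into `K` with
`ℚ`-spanning image. -/
def EmbedsAsField {Curve : Type} {Hom : Curve → Curve → Type}
    [∀ E F : Curve, AddCommGroup (Hom E F)]
    (T : IsogenyTheory Curve Hom) (E : Curve) (K : IntermediateField ℚ ℂ) : Prop :=
  ∃ φ : Hom E E → ↥K, Function.Injective φ ∧
    (∀ f g : Hom E E, φ (f + g) = φ f + φ g) ∧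
    (∀ f g : Hom E E, φ (T.comp f g) = φ f * φ g) ∧
    φ (T.one E) = 1 ∧
    Submodule.span ℚ (Set.range φ) = ⊤

/-! Composing with a non-zero `g₀ : E → E'` embeds `Hom(E', E)` into `End(E')`, scaling the
degree form by `deg g₀`, so it suffices to understand the degree form on `End(E') ⊂ K`. There
every `u` satisfies `u² - τ u + δ = 0` with `τ = polar deg 1 u`, `δ = deg u` and `τ² ≤ 4δ`,
hence `τ` is the trace of `u` in `K`, and polarizing gives `polar deg u v = Tr u Tr v - Tr uv`.
For a `ℚ`-basis `x` of the quadratic field `K`, the matrix `(Tr xᵢ Tr xⱼ - Tr xᵢxⱼ)` has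
determinant `-disc x`, and `disc x` differs from `D` by a non-zero rational square. -/

open QuadraticMap (polar)
open Module

section QuadraticExtension

variable {F L : Type*} [Field F] [CommRing L] [Algebra F L]

theorem Algebra.trace_one_of_finrank_eq_two (hL : finrank F L = 2) :
    Algebra.trace F L 1 = 2 := by
  rw [← map_one (algebraMap F L), Algebra.trace_algebraMap, hL, two_nsmul, one_add_one_eq_two]

theorem Algebra.trace_eq_of_mul_self_eq [LinearOrder F] [IsStrictOrderedRing F] [Nontrivial L]
    (hL : finrank F L = 2) {x : L} {t n : F} (hx : x * x = t • x - n • 1)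
    (hdisc : t ^ 2 ≤ 4 * n) :
    Algebra.trace F L x = t := by
  by_cases hxF : ∃ q : F, q • (1 : L) = x
  · -- a root in `F` of `X² - tX + n` with `t² ≤ 4n` is the double root `t / 2`
    obtain ⟨q, rfl⟩ := hxF
    rw [← Algebra.algebraMap_eq_smul_one, Algebra.smul_def, Algebra.smul_def, mul_one,
      ← map_mul, ← map_mul, ← map_sub] at hx
    have hq : q * q = t * q - n := FaithfulSMul.algebraMap_injective F L hx
    have hsq : (2 * q - t) ^ 2 = 0 := le_antisymm (by nlinarith) (sq_nonneg _)
    rw [← Algebra.algebraMap_eq_smul_one, Algebra.trace_algebraMap, hL]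
    linear_combination (exp := 2) hsq
  · push Not at hxF
    have hli : LinearIndependent F ![x, 1] :=
      linearIndependent_fin2.2 ⟨by simp, by simpa using hxF⟩
    let b := basisOfLinearIndependentOfCardEqFinrank hli (by simp [hL])
    have hb : ⇑b = ![x, 1] := coe_basisOfLinearIndependentOfCardEqFinrank hli _
    rw [Algebra.trace_eq_matrix_trace b, Matrix.trace_fin_two, Algebra.leftMulMatrix_eq_repr_mul,
      Algebra.leftMulMatrix_eq_repr_mul]
    have hx' : x * b 0 = t • b 0 - n • b 1 := by simpa [hb] using hx
    have h1 : x * b 1 = b 0 := by simp [hb]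
    simp [hx', h1]

theorem Algebra.det_trace_mul_trace_sub_trace_mul (hL : finrank F L = 2) {x : Fin 2 → L}
    (hx : LinearIndependent F x) :
    (Matrix.of fun i j => trace F L (x i) * trace F L (x j) - trace F L (x i * x j)).det
      = -Algebra.discr F x := by
  obtain ⟨c, hc⟩ : ∃ c : Fin 2 → F, c 0 • x 0 + c 1 • x 1 = 1 := by
    let b := basisOfLinearIndependentOfCardEqFinrank hx (by simp [hL])
    refine ⟨b.repr 1, ?_⟩
    simpa [Fin.sum_univ_two, b] using b.sum_repr 1
  -- with `1 = c₀ x₀ + c₁ x₁`, the traces form `M c` for the trace matrix `M`; `cᵀ M c = Tr 1`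
  have ht : ∀ i,
      trace F L (x i) = c 0 * trace F L (x i * x 0) + c 1 * trace F L (x i * x 1) := by
    intro i
    conv_lhs => rw [← mul_one (x i), ← hc]
    simp [mul_add]
  have h1 : 2 = c 0 * trace F L (x 0) + c 1 * trace F L (x 1) := by
    rw [← trace_one_of_finrank_eq_two hL, ← hc]
    simp
  rw [Algebra.discr_def, Matrix.det_fin_two, Matrix.det_fin_two]
  simp only [Matrix.of_apply, Algebra.traceMatrix_apply, Algebra.traceForm_apply,
    mul_comm (x 1) (x 0)]
  have ht₁ := ht 1
  rw [mul_comm (x 1) (x 0)] at ht₁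
  linear_combination
    (trace F L (x 0 * x 0) * trace F L (x 1 * x 1) - trace F L (x 0 * x 1) ^ 2) * h1
      - (trace F L (x 0) * trace F L (x 1 * x 1) - trace F L (x 1) * trace F L (x 0 * x 1)) * ht 0
      - (trace F L (x 1) * trace F L (x 0 * x 0) - trace F L (x 0) * trace F L (x 0 * x 1)) * ht₁

end QuadraticExtension

namespace IsogenyTheory

variable {Curve : Type} {Hom : Curve → Curve → Type} [∀ E F : Curve, AddCommGroup (Hom E F)]
  (T : IsogenyTheory Curve Hom) {E F G : Curve}

def compLeft (f : Hom F G) : Hom E F →+ Hom E G :=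
  AddMonoidHom.mk' (T.comp f) (T.comp_add f)

def compRight (g : Hom E F) : Hom F G →+ Hom E G :=
  AddMonoidHom.mk' (T.comp · g) (T.add_comp · · g)

theorem neg_comp (f : Hom F G) (g : Hom E F) : T.comp (-f) g = -T.comp f g :=
  (T.compRight g).map_neg f

theorem deg_nonneg (f : Hom E F) : 0 ≤ T.deg f := by
  rcases eq_or_ne f 0 with rfl | hf
  · exact T.deg_zero.ge
  · exact (T.deg_pos f hf).le

theorem eq_zero_of_deg_eq_zero {f : Hom E F} (h : T.deg f = 0) : f = 0 := by
  by_contra hf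
  exact (T.deg_pos f hf).ne' h

theorem deg_neg (f : Hom E F) : T.deg (-f) = T.deg f := by
  have hneg : ∀ {D : Curve} (g : Hom D F), T.comp (-T.one F) g = -g := fun g => by
    rw [T.neg_comp, T.one_comp]
  have h : T.deg (-T.one F) = 1 := by
    have := T.deg_comp (-T.one F) (-T.one F)
    rw [hneg, neg_neg, T.deg_one] at this
    nlinarith [T.deg_nonneg (-T.one F)]
  rw [← hneg, T.deg_comp, h, one_mul]

theorem deg_add (f g : Hom E F) : T.deg (f + g) = T.deg f + T.deg g + polar T.deg f g := by
  simp only [polar]; ring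

theorem polar_deg_add_left (f g h : Hom E F) :
    polar T.deg (f + g) h = polar T.deg f h + polar T.deg g h :=
  T.deg_quadratic f g h

theorem polar_deg_add_right (f g h : Hom E F) :
    polar T.deg f (g + h) = polar T.deg f g + polar T.deg f h := by
  rw [QuadraticMap.polar_comm, T.polar_deg_add_left, QuadraticMap.polar_comm _ g,
    QuadraticMap.polar_comm _ h]

def polarDegLeft (h : Hom E F) : Hom E F →+ ℤ :=
  AddMonoidHom.mk' (polar T.deg · h) (T.polar_deg_add_left · · h)

theorem polar_deg_zsmul_left (n : ℤ) (f h : Hom E F) :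
    polar T.deg (n • f) h = n * polar T.deg f h :=
  (T.polarDegLeft h).map_zsmul n f

theorem polar_deg_zsmul_right (n : ℤ) (f h : Hom E F) :
    polar T.deg f (n • h) = n * polar T.deg f h := by
  rw [QuadraticMap.polar_comm, T.polar_deg_zsmul_left, QuadraticMap.polar_comm]

theorem polar_deg_sub_left (f g h : Hom E F) :
    polar T.deg (f - g) h = polar T.deg f h - polar T.deg g h :=
  (T.polarDegLeft h).map_sub f g

theorem polar_deg_sub_right (f g h : Hom E F) :
    polar T.deg f (g - h) = polar T.deg f g - polar T.deg f h := by
  rw [QuadraticMap.polar_comm, T.polar_deg_sub_left, QuadraticMap.polar_comm _ g,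
    QuadraticMap.polar_comm _ h]

theorem polar_deg_self (f : Hom E F) : polar T.deg f f = 2 * T.deg f := by
  have h := T.polar_deg_add_right f f (-f)
  simp only [polar, add_neg_cancel, add_zero, T.deg_zero, T.deg_neg] at h ⊢
  linarith

theorem deg_zsmul (n : ℤ) (f : Hom E F) : T.deg (n • f) = n ^ 2 * T.deg f := by
  have h := T.polar_deg_self (n • f)
  rw [T.polar_deg_zsmul_left, T.polar_deg_zsmul_right, T.polar_deg_self] at h
  exact mul_left_cancel₀ two_ne_zero (by linear_combination -h)

theorem polar_deg_comp_left (h : Hom F G) (f g : Hom E F) :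
    polar T.deg (T.comp h f) (T.comp h g) = T.deg h * polar T.deg f g := by
  simp only [polar, ← T.comp_add, T.deg_comp]; ring

theorem sq_polar_deg_one_le (u : Hom E E) : polar T.deg (T.one E) u ^ 2 ≤ 4 * T.deg u := by
  have hw : 2 * T.deg (polar T.deg (T.one E) u • T.one E - (2 : ℤ) • u)
      = 2 * (4 * T.deg u - polar T.deg (T.one E) u ^ 2) := by
    rw [← T.polar_deg_self]
    simp only [T.polar_deg_sub_left, T.polar_deg_sub_right, T.polar_deg_zsmul_left,
      T.polar_deg_zsmul_right, T.polar_deg_self, T.deg_one,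
      QuadraticMap.polar_comm _ u (T.one E)]
    ring
  linarith [T.deg_nonneg (polar T.deg (T.one E) u • T.one E - (2 : ℤ) • u)]

theorem comp_self (u : Hom E E) :
    T.comp u u = polar T.deg (T.one E) u • u - T.deg u • T.one E := by
  have h₁ : polar T.deg u (T.comp u u) = T.deg u * polar T.deg (T.one E) u := by
    simpa only [T.comp_one] using T.polar_deg_comp_left u (T.one E) u
  have h₂ : polar T.deg (T.one E) (T.comp u u) = polar T.deg (T.one E) u ^ 2 - 2 * T.deg u := by
    have h := T.polar_deg_comp_left (T.one E + u) (T.one E) u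
    rw [T.comp_one, T.add_comp, T.one_comp, T.deg_add, T.deg_one, T.polar_deg_add_left,
      T.polar_deg_add_right, T.polar_deg_add_right, T.polar_deg_self, h₁] at h
    linear_combination h
  -- `u ∘ u - τ u + δ` has degree `0`
  rw [← sub_eq_zero]
  refine T.eq_zero_of_deg_eq_zero (mul_left_cancel₀ two_ne_zero ?_)
  rw [← T.polar_deg_self]
  simp only [T.polar_deg_sub_left, T.polar_deg_sub_right, T.polar_deg_zsmul_left,
    T.polar_deg_zsmul_right, T.polar_deg_self, T.deg_one, T.deg_comp, h₁, h₂,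
    QuadraticMap.polar_comm _ u (T.one E), QuadraticMap.polar_comm _ (T.comp u u)]
  ring

theorem comp_injective {g : Hom F G} (hg : g ≠ 0) :
    Function.Injective (T.comp g : Hom E F → Hom E G) := by
  refine (injective_iff_map_eq_zero (T.compLeft g)).2 fun f hf => T.eq_zero_of_deg_eq_zero ?_
  have h := T.deg_comp g f
  rw [show T.comp g f = 0 from hf, T.deg_zero] at h
  exact (mul_eq_zero.1 h.symm).resolve_left (T.deg_pos g hg).ne'

theorem exists_ne_zero_of_ne_zero (T : IsogenyTheory Curve Hom) {f : Hom E F} (hf : f ≠ 0) :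
    ∃ g : Hom F E, g ≠ 0 := by
  obtain ⟨g, hgf, -⟩ := T.exists_dual f hf
  refine ⟨g, fun hg => ?_⟩
  have h := T.deg_comp g f
  rw [hgf, hg, T.deg_zero, T.deg_zsmul, T.deg_one, zero_mul, mul_one] at h
  exact (T.deg_pos f hf).ne' (pow_eq_zero_iff two_ne_zero |>.1 h)

variable {K : Type*} [Field K] [Algebra ℚ K]

theorem map_mul_self (φ : Hom E E →+ K) (hφ_comp : ∀ f g, φ (T.comp f g) = φ f * φ g)
    (hφ_one : φ (T.one E) = 1) (u : Hom E E) :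
    φ u * φ u
      = ((polar T.deg (T.one E) u : ℤ) : ℚ) • φ u - ((T.deg u : ℤ) : ℚ) • 1 := by
  rw [← hφ_comp, T.comp_self, map_sub, map_zsmul, map_zsmul, hφ_one, Int.cast_smul_eq_zsmul,
    Int.cast_smul_eq_zsmul]

theorem trace_map_eq_polar_deg_one (φ : Hom E E →+ K)
    (hφ_comp : ∀ f g, φ (T.comp f g) = φ f * φ g) (hφ_one : φ (T.one E) = 1)
    (hK : finrank ℚ K = 2) (u : Hom E E) :
    Algebra.trace ℚ K (φ u) = polar T.deg (T.one E) u :=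
  Algebra.trace_eq_of_mul_self_eq hK (T.map_mul_self φ hφ_comp hφ_one u)
    (by exact_mod_cast T.sq_polar_deg_one_le u)

theorem polar_deg_eq_trace (φ : Hom E E →+ K) (hφ_comp : ∀ f g, φ (T.comp f g) = φ f * φ g)
    (hφ_one : φ (T.one E) = 1) (hK : finrank ℚ K = 2) (u v : Hom E E) :
    ((polar T.deg u v : ℤ) : ℚ) = Algebra.trace ℚ K (φ u) * Algebra.trace ℚ K (φ v)
      - Algebra.trace ℚ K (φ u * φ v) := by
  have key : ∀ w, 2 * (T.deg w : ℚ) = Algebra.trace ℚ K (φ w) ^ 2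
      - Algebra.trace ℚ K (φ w * φ w) := by
    intro w
    rw [T.map_mul_self φ hφ_comp hφ_one w, map_sub, map_smul, map_smul,
      Algebra.trace_one_of_finrank_eq_two hK, T.trace_map_eq_polar_deg_one φ hφ_comp hφ_one hK]
    simp only [smul_eq_mul]; ring
  have huv := key (u + v)
  rw [map_add, add_mul, mul_add, mul_add, map_add, map_add, map_add, map_add,
    mul_comm (φ v) (φ u)] at huv
  simp only [polar]; push_cast
  linear_combination (huv - key u - key v) / 2

end IsogenyTheory

theorem NumberField.exists_discr_eq_sq_mul_discr {K : Type*} [Field K] [NumberField K]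
    {ι : Type*} [Fintype ι] [DecidableEq ι] (b : Basis ι ℚ K) :
    ∃ r : ℚ, r ≠ 0 ∧ Algebra.discr ℚ b = r ^ 2 * NumberField.discr K := by
  let e := (NumberField.integralBasis K).indexEquiv b
  let b' := (NumberField.integralBasis K).reindex e
  refine ⟨(b'.toMatrix b).det, fun h => ?_, ?_⟩
  · have := congrArg Matrix.det (b'.toMatrix_mul_toMatrix_flip b)
    rw [Matrix.det_mul, h, zero_mul, Matrix.det_one] at this
    exact zero_ne_one this
  · rw [NumberField.coe_discr, ← Algebra.discr_reindex ℚ _ e, ← Basis.coe_reindex,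
      ← Algebra.discr_of_matrix_vecMul, Basis.toMatrix_map_vecMul]

theorem Int.exists_sq_mul_eq_neg_sq_mul_of_rat {a b c : ℤ} (hc : c ≠ 0) {r : ℚ} (hr : r ≠ 0)
    (h : (c : ℚ) ^ 2 * a = -(r ^ 2 * b)) :
    ∃ m n : ℤ, m ≠ 0 ∧ n ≠ 0 ∧ m ^ 2 * a = -(n ^ 2) * b := by
  refine ⟨c * r.den, r.num, mul_ne_zero hc (by exact_mod_cast r.den_nz),
    Rat.num_ne_zero.2 hr, ?_⟩
  have hnum : (r.num : ℚ) = r * r.den := (Rat.mul_den_eq_num r).symm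
  have : ((c * r.den : ℤ) : ℚ) ^ 2 * a = -((r.num : ℚ) ^ 2) * b := by
    rw [hnum]; push_cast; linear_combination (r.den : ℚ) ^ 2 * h
  exact_mod_cast this

/-- Let `E'`, `E` be isogenous elliptic curves in characteristic `0`
whose endomorphism algebras are both isomorphic to an imaginary quadratic field `K` of
discriminant `D`.  Equip `Hom(E', E)` with the degree form.  Then there are non-zero
integers `m` and `n` with `m² · disc Hom(E', E) = − n² · D`. -/
theorem disc_hom_lattice_eq_disc_field_up_to_squares
    (Curve : Type) (Hom : Curve → Curve → Type)
    [∀ E F : Curve, AddCommGroup (Hom E F)]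
    (T : IsogenyTheory Curve Hom)
    (E' E : Curve)
    (K : IntermediateField ℚ ℂ) [NumberField ↥K]
    (hquad : Module.finrank ℚ ↥K = 2)
    (him : ∃ z : ↥K, (z : ℂ).im ≠ 0)
    (hE' : EmbedsAsField T E' K) (hE : EmbedsAsField T E K)
    (hisog : ∃ f : Hom E' E, f ≠ 0)
    (bas : Module.Basis (Fin 2) ℤ (Hom E' E)) :
    ∃ m n : ℤ, m ≠ 0 ∧ n ≠ 0 ∧
      m ^ 2 * (Matrix.of fun i j =>
          T.deg (bas i + bas j) - T.deg (bas i) - T.deg (bas j)).det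
        = -(n ^ 2) * NumberField.discr ↥K := by
  obtain ⟨φ, hφ_inj, hφ_add, hφ_comp, hφ_one, -⟩ := hE'
  let Φ : Hom E' E' →+ K := AddMonoidHom.mk' φ hφ_add
  obtain ⟨f₀, hf₀⟩ := hisog
  obtain ⟨g₀, hg₀⟩ := T.exists_ne_zero_of_ne_zero hf₀
  let ψ : Hom E' E →+ K := Φ.comp (T.compLeft g₀)
  let x := ψ ∘ bas
  have hx : LinearIndependent ℚ x :=
    (LinearIndependent.iff_fractionRing ℤ ℚ).1 <| bas.linearIndependent.map' ψ.toIntLinearMap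
      (LinearMap.ker_eq_bot.2 (hφ_inj.comp (T.comp_injective hg₀)))
  obtain ⟨r, hr, hdiscr⟩ :=
    NumberField.exists_discr_eq_sq_mul_discr
      (basisOfLinearIndependentOfCardEqFinrank hx (by simp [hquad]))
  set G := Matrix.of fun i j => T.deg (bas i + bas j) - T.deg (bas i) - T.deg (bas j)
  have hgram : (T.deg g₀ : ℚ) • G.map ((↑) : ℤ → ℚ) = Matrix.of fun i j =>
      Algebra.trace ℚ K (x i) * Algebra.trace ℚ K (x j) - Algebra.trace ℚ K (x i * x j) := by
    ext i j
    have h :=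
      T.polar_deg_eq_trace Φ hφ_comp hφ_one hquad (T.comp g₀ (bas i)) (T.comp g₀ (bas j))
    rw [T.polar_deg_comp_left, Int.cast_mul] at h
    exact h
  have hdet := Matrix.det_smul (G.map ((↑) : ℤ → ℚ)) (T.deg g₀ : ℚ)
  rw [hgram, Algebra.det_trace_mul_trace_sub_trace_mul hquad hx, Fintype.card_fin] at hdet
  refine Int.exists_sq_mul_eq_neg_sq_mul_of_rat (T.deg_pos g₀ hg₀).ne' hr ?_
  rw [Int.cast_det, ← hdet, ← hdiscr, coe_basisOfLinearIndependentOfCardEqFinrank]
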